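/- For real σ > 1, the function t ↦ ξ(2(σ+it))/ξ(σ+it) is integrable over t ∈ ℝ (i.e., the vertical-line integral of ξ(2s)/ξ(s) converges absolutely). -/

import Mathlib

open Complex Filter

/-- The completed zeta formula `ξ(s) = (s-1) π^(-s/2) Γ(1+s/2) ζ(s)`. -/
noncomputable def xiFormula (s : ℂ) : ℂ :=
  (s - 1) * (Real.pi : ℂ) ^ (-s / 2) * Complex.Gamma (1 + s / 2) * riemannZeta s

/-- `Ξ` is the entire function given by `(s-1) π^(-s/2) Γ(1+s/2) ζ(s)` away from the
points where Mathlib's `riemannZeta`/`Complex.Gamma` take junk values. -/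
def IsXi (Ξ : ℂ → ℂ) : Prop :=
  Differentiable ℂ Ξ ∧
    ∀ s : ℂ, s ≠ 1 → (∀ n : ℕ, s ≠ -2 * ((n : ℂ) + 1)) → Ξ s = xiFormula s

/-!
By Legendre's duplication formula, `ξ(2s)/ξ(s)` equals `Γ((1+s)/2)` times
`(2 + 1/(s-1)) π^(-s/2) 2^s / √π · ζ(2s) / ζ(s)`. On the line `Re s = σ > 1` the second factor is
bounded, because `ζ(2s)` and `1/ζ(s) = ∑ μ(n) n^(-s)` are absolutely convergent Dirichlet series.
The first factor is integrable: `Γ(w) = Γ(w+2) / (w(w+1))` and `|Γ(w+2)| ≤ Γ(Re w + 2)`, so `Γ`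
decays like `|Im w|^(-2)` along vertical lines.
-/

open MeasureTheory

namespace Complex

lemma norm_Gamma_le_Gamma_re {w : ℂ} (hw : 0 < w.re) : ‖Gamma w‖ ≤ Real.Gamma w.re := by
  rw [Gamma_eq_integral hw, Real.Gamma_eq_integral hw, GammaIntegral]
  refine (norm_integral_le_integral_norm _).trans_eq ?_
  refine setIntegral_congr_fun measurableSet_Ioi fun x hx => ?_
  rw [norm_mul, norm_real, Real.norm_eq_abs, norm_cpow_eq_rpow_re_of_pos hx,
    abs_of_nonneg (Real.exp_nonneg _)]
  simp

lemma differentiableAt_Gamma_of_re_pos {w : ℂ} (hw : 0 < w.re) : DifferentiableAt ℂ Gamma w :=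
  differentiableAt_Gamma w fun m h => by
    have := congrArg re h
    simp only [neg_re, natCast_re] at this
    linarith [m.cast_nonneg (α := ℝ)]

lemma norm_Gamma_le_div_sq_norm {w : ℂ} (hw : 0 < w.re) :
    ‖Gamma w‖ ≤ Real.Gamma (w.re + 2) / ‖w‖ ^ 2 := by
  have hw0 : w ≠ 0 := fun h => by simp [h] at hw
  have hw1 : w + 1 ≠ 0 := fun h => by
    have := congrArg re h
    simp only [add_re, one_re, zero_re] at this
    linarith
  have hshift : Gamma (w + 2) = (w + 1) * w * Gamma w := by
    rw [show w + 2 = w + 1 + 1 by ring, Gamma_add_one _ hw1, Gamma_add_one _ hw0, mul_assoc]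
  have hnorm : ‖w‖ ≤ ‖w + 1‖ := by
    refine le_of_pow_le_pow_left₀ two_ne_zero (norm_nonneg _) ?_
    rw [Complex.sq_norm, Complex.sq_norm, normSq_apply, normSq_apply]
    simp only [add_re, one_re, add_im, one_im, add_zero]
    nlinarith
  rw [le_div_iff₀ (by positivity)]
  calc ‖Gamma w‖ * ‖w‖ ^ 2 ≤ ‖w + 1‖ * ‖w‖ * ‖Gamma w‖ := by
        rw [sq, mul_comm]; gcongr
    _ = ‖Gamma (w + 2)‖ := by rw [hshift, norm_mul, norm_mul]
    _ ≤ Real.Gamma (w.re + 2) := by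
        simpa using norm_Gamma_le_Gamma_re (w := w + 2) (by simp; linarith)

lemma integrable_Gamma_add_mul_I {a : ℝ} (ha : 0 < a) :
    Integrable fun t : ℝ => Gamma (a + t * I) := by
  have hre (t : ℝ) : (a + t * I : ℂ).re = a := by simp
  have hdom : Integrable fun t : ℝ => Real.Gamma (a + 2) * (a ^ 2 + t ^ 2)⁻¹ := by
    refine ((integrable_inv_one_add_sq.comp_div ha.ne').const_mul (Real.Gamma (a + 2) / a ^ 2))
      |>.congr (ae_of_all _ fun t => ?_)
    field_simp
  refine hdom.mono' ?_ (ae_of_all _ fun t => ?_)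
  · refine (continuous_iff_continuousAt.2 fun t => ?_).aestronglyMeasurable
    exact (differentiableAt_Gamma_of_re_pos (by rw [hre]; exact ha)).continuousAt.comp
      (by fun_prop)
  · refine (norm_Gamma_le_div_sq_norm (by rw [hre]; exact ha)).trans_eq ?_
    rw [hre, Complex.sq_norm, normSq_apply]
    simp [div_eq_mul_inv, sq]

end Complex

lemma LSeries.norm_LSeries_le (f : ℕ → ℂ) (s : ℂ) :
    ‖LSeries f s‖ ≤ ∑' n, ‖LSeries.term f s.re n‖ := by
  have hre (n : ℕ) : ‖LSeries.term f s n‖ = ‖LSeries.term f s.re n‖ := by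
    simp [LSeries.norm_term_eq]
  simp_rw [← hre]
  by_cases hf : Summable fun n => ‖LSeries.term f s n‖
  · exact norm_tsum_le_tsum_norm hf
  · rw [LSeries, tsum_eq_zero_of_not_summable (mt summable_norm_iff.2 hf), norm_zero]
    exact tsum_nonneg fun n => norm_nonneg _

lemma norm_riemannZeta_le {s : ℂ} (hs : 1 < s.re) :
    ‖riemannZeta s‖ ≤ ∑' n, ‖LSeries.term 1 s.re n‖ :=
  LSeries_one_eq_riemannZeta hs ▸ LSeries.norm_LSeries_le 1 s

lemma inv_riemannZeta_eq_LSeries_moebius {s : ℂ} (hs : 1 < s.re) :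
    (riemannZeta s)⁻¹ = LSeries (fun n => ArithmeticFunction.moebius n) s :=
  inv_eq_of_mul_eq_one_right (LSeries_one_eq_riemannZeta hs ▸ LSeries_one_mul_Lseries_moebius hs)

lemma norm_inv_riemannZeta_le {s : ℂ} (hs : 1 < s.re) :
    ‖(riemannZeta s)⁻¹‖ ≤
      ∑' n, ‖LSeries.term (fun n => ArithmeticFunction.moebius n) s.re n‖ :=
  inv_riemannZeta_eq_LSeries_moebius hs ▸ LSeries.norm_LSeries_le _ s

lemma xiFormula_ne_zero {s : ℂ} (hs : 1 < s.re) : xiFormula s ≠ 0 := by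
  have hs1 : s - 1 ≠ 0 := sub_ne_zero.2 <| by rintro rfl; simp at hs
  have hΓ : Gamma (1 + s / 2) ≠ 0 := Gamma_ne_zero_of_re_pos
    (by simp only [add_re, one_re, div_ofNat_re]; linarith)
  have hπ : (Real.pi : ℂ) ^ (-s / 2) ≠ 0 := by simp [cpow_eq_zero_iff, Real.pi_ne_zero]
  exact mul_ne_zero (mul_ne_zero (mul_ne_zero hs1 hπ) hΓ) (riemannZeta_ne_zero_of_one_lt_re hs)

lemma xiFormula_two_mul_div {s : ℂ} (hs : 1 < s.re) :
    xiFormula (2 * s) / xiFormula s =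
      (2 + (s - 1)⁻¹) * (Real.pi : ℂ) ^ (-s / 2) * 2 ^ s / (Real.sqrt Real.pi : ℂ)
        * riemannZeta (2 * s) * (riemannZeta s)⁻¹ * Gamma ((1 + s) / 2) := by
  have hs1 : s - 1 ≠ 0 := sub_ne_zero.2 <| by rintro rfl; simp at hs
  have hΓ : Gamma (1 + s / 2) ≠ 0 := Gamma_ne_zero_of_re_pos
    (by simp only [add_re, one_re, div_ofNat_re]; linarith)
  have hπ : (Real.pi : ℂ) ≠ 0 := by exact_mod_cast Real.pi_ne_zero
  have hsqrtπ : (Real.sqrt Real.pi : ℂ) ≠ 0 := by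
    exact_mod_cast (Real.sqrt_pos.2 Real.pi_pos).ne'
  have h2 : (2 : ℂ) ^ s ≠ 0 := by simp [cpow_eq_zero_iff]
  have hζ := riemannZeta_ne_zero_of_one_lt_re hs
  have hπ2 : (Real.pi : ℂ) ^ (-(2 * s) / 2) =
      (Real.pi : ℂ) ^ (-s / 2) * (Real.pi : ℂ) ^ (-s / 2) := by
    rw [← cpow_add _ _ hπ]; ring_nf
  have hdup : Gamma (1 + 2 * s / 2) =
      Gamma ((1 + s) / 2) * Gamma (1 + s / 2) * 2 ^ s / (Real.sqrt Real.pi : ℂ) := by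
    have h := Gamma_mul_Gamma_add_half ((1 + s) / 2)
    rw [show (1 + s) / 2 + 1 / 2 = 1 + s / 2 by ring, show 2 * ((1 + s) / 2) = 1 + s by ring,
      show 1 - (1 + s) = -s by ring, cpow_neg] at h
    rw [h, show 1 + 2 * s / 2 = 1 + s by ring]
    field_simp
  rw [div_eq_iff (xiFormula_ne_zero hs), xiFormula, xiFormula, hπ2, hdup]
  field_simp
  ring

lemma differentiableAt_xiFormula {s : ℂ} (hs1 : s ≠ 1) (hs : -2 < s.re) :
    DifferentiableAt ℂ xiFormula s := by
  have hΓ : DifferentiableAt ℂ (fun s => Gamma (1 + s / 2)) s :=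
    (differentiableAt_Gamma_of_re_pos (by simp only [add_re, one_re, div_ofNat_re]; linarith)).comp
      s (by fun_prop)
  have hπ : DifferentiableAt ℂ (fun s : ℂ => (Real.pi : ℂ) ^ (-s / 2)) s :=
    (differentiableAt_id.neg.div_const 2).const_cpow
      (Or.inl (by exact_mod_cast Real.pi_ne_zero))
  unfold xiFormula
  exact (((differentiableAt_id.sub_const 1).mul hπ).mul hΓ).mul (differentiableAt_riemannZeta hs1)

lemma continuousOn_xiFormula : ContinuousOn xiFormula {s | 1 < s.re} := fun s hs =>
  have hs1 : s ≠ 1 := by rintro rfl; simp at hs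
  (differentiableAt_xiFormula hs1 (by linarith [hs.out])).continuousAt.continuousWithinAt

lemma norm_two_add_inv_sub_one_le {s : ℂ} (hs : 1 < s.re) :
    ‖2 + (s - 1)⁻¹‖ ≤ 2 + (s.re - 1)⁻¹ := by
  refine (norm_add_le _ _).trans ?_
  rw [norm_inv, Complex.norm_two]
  gcongr
  simpa using re_le_norm (s - 1)

lemma exists_norm_xiFormula_two_mul_div_le {σ : ℝ} (hσ : 1 < σ) :
    ∃ C, ∀ s : ℂ, s.re = σ →
      ‖xiFormula (2 * s) / xiFormula s‖ ≤ C * ‖Gamma ((1 + s) / 2)‖ := by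
  refine ⟨(2 + (σ - 1)⁻¹) * Real.pi ^ (-σ / 2) * 2 ^ σ / Real.sqrt Real.pi
    * (∑' n, ‖LSeries.term 1 (2 * σ : ℝ) n‖)
    * ∑' n, ‖LSeries.term (fun n => ArithmeticFunction.moebius n) σ n‖, ?_⟩
  rintro s rfl
  have h2s : (2 * s).re = 2 * s.re := by simp
  have hζ2 := norm_riemannZeta_le (s := 2 * s) (by rw [h2s]; linarith)
  rw [h2s] at hζ2
  rw [xiFormula_two_mul_div hσ]
  have h2 : ‖(2 : ℂ) ^ s‖ = 2 ^ s.re := by simpa using norm_natCast_cpow_of_pos two_pos s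
  simp only [norm_mul, norm_div, norm_real, Real.norm_eq_abs, abs_of_nonneg (Real.sqrt_nonneg _),
    norm_cpow_eq_rpow_re_of_pos Real.pi_pos, h2, neg_re, div_ofNat_re]
  gcongr
  · exact norm_two_add_inv_sub_one_le hσ
  · exact norm_inv_riemannZeta_le hσ

theorem f_integrable_on_vertical_line (σ : ℝ) (hσ : 1 < σ) :
    MeasureTheory.Integrable
      (fun t : ℝ => xiFormula (2 * (σ + t * I)) / xiFormula (σ + t * I)) := by
  obtain ⟨C, hC⟩ := exists_norm_xiFormula_two_mul_div_le hσ
  have hline : ∀ t : ℝ, ((σ : ℂ) + t * I).re = σ := by simp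
  have hΓ : Integrable fun t : ℝ => Gamma ((1 + (σ + t * I)) / 2) := by
    refine ((integrable_Gamma_add_mul_I (a := (1 + σ) / 2) (by linarith)).comp_div
      two_ne_zero).congr (ae_of_all _ fun t => ?_)
    push_cast
    congr 1
    ring
  refine (hΓ.norm.const_mul C).mono' ?_ (ae_of_all _ fun t => hC _ (hline t))
  have hξ := continuousOn_xiFormula
  refine (Continuous.div ?_ ?_ fun t => xiFormula_ne_zero (by rw [hline]; exact hσ))
    |>.aestronglyMeasurable
  · exact hξ.comp_continuous (by fun_prop) fun t => by simp; linarith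
  · exact hξ.comp_continuous (by fun_prop) fun t => by simp [hσ]
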